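/- Let {G_i, φ_i^j : i ∈ I} be a directed system of groups over a directed set I, and for each i fix a functorial free presentation G_i ≅ F_i/R_i. Then the c-nilpotent multiplier commutes with the direct limit: colim_i M^{(c)}(G_i) ≅ M^{(c)}(colim_i G_i), for every c ≥ 1. -/

import Mathlib

/-- `[R, _n F]`. -/
def iterCommWith {F : Type*} [Group F] (R : Subgroup F) : ℕ → Subgroup F
  | 0 => R
  | n + 1 => ⁅iterCommWith R n, (⊤ : Subgroup F)⁆

instance iterCommWith_normal {F : Type*} [Group F] (R : Subgroup F) [R.Normal] (n : ℕ) :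
    (iterCommWith R n).Normal := by
  induction n with
  | zero => assumption
  | succ n ih => exact Subgroup.commutator_normal _ _

/-- The kernel of the canonical presentation `FreeGroup G → G`. -/
def presKer (G : Type*) [Group G] : Subgroup (FreeGroup G) :=
  (FreeGroup.lift (id : G → G)).ker

instance presKer_normal (G : Type*) [Group G] : (presKer G).Normal :=
  MonoidHom.normal_ker _

/-- The `c`-nilpotent multiplier `M^{(c)}(G) = (R ∩ γ_{c+1}(F))/[R, _c F]`, computed from the
canonical free presentation `F = FreeGroup G`, `R = ker (F → G)`. -/
def nilMult (c : ℕ) (G : Type*) [Group G] :=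
  (presKer G ⊓ Subgroup.lowerCentralSeries (⊤ : Subgroup (FreeGroup G)) c : Subgroup (FreeGroup G)) ⧸
    ((iterCommWith (presKer G) c).subgroupOf
      (presKer G ⊓ Subgroup.lowerCentralSeries (⊤ : Subgroup (FreeGroup G)) c : Subgroup (FreeGroup G)))

instance (c : ℕ) (G : Type*) [Group G] : Group (nilMult c G) := by
  unfold nilMult; infer_instance

/-- A homomorphism `Mc(G) →* Mc(H)` is "induced" by `φ : G →* H` if it is compatible with
`FreeGroup.map φ` on the canonical presentations. -/
def IsInducedMap {G H : Type*} [Group G] [Group H] (c : ℕ) (φ : G →* H)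
    (m : nilMult c G →* nilMult c H) : Prop :=
  ∀ (x : FreeGroup G) (hx : x ∈ presKer G ⊓ Subgroup.lowerCentralSeries (⊤ : Subgroup (FreeGroup G)) c)
    (hx' : FreeGroup.map φ x ∈ presKer H ⊓ Subgroup.lowerCentralSeries (⊤ : Subgroup (FreeGroup H)) c),
    m (QuotientGroup.mk ⟨x, hx⟩) = QuotientGroup.mk ⟨FreeGroup.map φ x, hx'⟩

/-!
The free group functor preserves direct limits: a word lifts letter by letter, and a word that
dies in the limit involves finitely many letters, all of whose identifications in the limit
already happen at one stage. In a direct limit of groups, limits of compatible families of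
subgroups commute with commutators, because two elements of the limit come from a common stage;
and a word of `FreeGroup G_i` that becomes a relation of `colim G` is a relation at a later stage.
Hence `R ∩ γ_{c+1}(F)` and `[R, _c F]` are the direct limits of the corresponding subgroups of the
`F_i`, and so is their quotient.
-/

open Filter
open scoped commutatorElement

structure IsDirectLimit {J : Type*} [Preorder J] {A : J → Type*} {B : Type*}
    (f : ∀ i j, i ≤ j → A i → A j) (g : ∀ i, A i → B) : Prop where
  map_compat : ∀ i j (h : i ≤ j) (x : A i), g j (f i j h x) = g i x
  exists_eq : ∀ y : B, ∃ (i : J) (x : A i), g i x = y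
  exists_map_eq : ∀ i (x x' : A i), g i x = g i x' → ∃ (j : J) (h : i ≤ j), f i j h x = f i j h x'

namespace FreeGroup

variable {α β γ : Type*}

theorem map_map_eq {f₁ : α → β} {f₂ : β → γ} {f₃ : α → γ} (h : ∀ a, f₂ (f₁ a) = f₃ a)
    (x : FreeGroup α) : map f₂ (map f₁ x) = map f₃ x := by
  rw [map.comp, show f₂ ∘ f₁ = f₃ from funext h]

theorem exists_finset_mem_closure (z : FreeGroup α) :
    ∃ S : Finset α, z ∈ Subgroup.closure (of '' (S : Set α)) := by
  classical
  induction z using FreeGroup.induction_on with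
  | C1 => exact ⟨∅, one_mem _⟩
  | of a => exact ⟨{a}, Subgroup.subset_closure ⟨a, by simp, rfl⟩⟩
  | inv_of a _ => exact ⟨{a}, inv_mem (Subgroup.subset_closure ⟨a, by simp, rfl⟩)⟩
  | mul x y ihx ihy =>
    obtain ⟨S, hS⟩ := ihx
    obtain ⟨T, hT⟩ := ihy
    refine ⟨S ∪ T, mul_mem ?_ ?_⟩
    · exact Subgroup.closure_mono (Set.image_mono (by simp)) hS
    · exact Subgroup.closure_mono (Set.image_mono (by simp)) hT

-- On words in `S`, `map ψ = lift (extend φ (of ∘ ψ)) ∘ map φ`.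
theorem map_eq_one_of_factorsThrough {S : Set α} {φ : α → β} {ψ : α → γ}
    (h : (S.domRestrict ψ).FactorsThrough (S.domRestrict φ)) {z : FreeGroup α}
    (hz : z ∈ Subgroup.closure (of '' S)) (h1 : map φ z = 1) : map ψ z = 1 := by
  set e : β → FreeGroup γ := Function.extend (S.domRestrict φ) (of ∘ S.domRestrict ψ) 1
  have hfac : (of ∘ S.domRestrict ψ).FactorsThrough (S.domRestrict φ) :=
    fun a b hab => congrArg of (h hab)
  have hle : Subgroup.closure (of '' S) ≤ ((lift e).comp (map φ)).eqLocus (map ψ) := by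
    rw [Subgroup.closure_le]
    rintro _ ⟨a, ha, rfl⟩
    change lift e (of (φ a)) = of (ψ a)
    rw [lift_apply_of]
    exact hfac.extend_apply 1 ⟨a, ha⟩
  have heq : lift e (map φ z) = map ψ z := hle hz
  rw [← heq, h1, MonoidHom.map_one]

end FreeGroup

namespace IsDirectLimit

section Types

variable {J : Type*} [Preorder J] {A : J → Type*} {B : Type*}
  {f : ∀ i j, i ≤ j → A i → A j} {g : ∀ i, A i → B}

theorem eventually_map_eq
    (hf : ∀ i j k (hij : i ≤ j) (hjk : j ≤ k) x, f j k hjk (f i j hij x) = f i k (hij.trans hjk) x)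
    (hg : IsDirectLimit f g) {i : J} {x x' : A i} (h : g i x = g i x') :
    ∀ᶠ k in atTop, ∃ hik : i ≤ k, f i k hik x = f i k hik x' := by
  obtain ⟨j, hij, e⟩ := hg.exists_map_eq i x x' h
  filter_upwards [eventually_ge_atTop j] with k hjk
  exact ⟨hij.trans hjk, by rw [← hf i j k hij hjk, e, hf]⟩

theorem exists_freeGroupMap_eq_one [Nonempty J] [IsDirectedOrder J]
    (hf : ∀ i j k (hij : i ≤ j) (hjk : j ≤ k) x, f j k hjk (f i j hij x) = f i k (hij.trans hjk) x)
    (hg : IsDirectLimit f g) {i : J} {z : FreeGroup (A i)} (hz : FreeGroup.map (g i) z = 1) :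
    ∃ (j : J) (h : i ≤ j), FreeGroup.map (f i j h) z = 1 := by
  obtain ⟨S, hS⟩ := FreeGroup.exists_finset_mem_closure z
  have hev : ∀ᶠ k in atTop, i ≤ k ∧
      ∀ p ∈ S ×ˢ S, g i p.1 = g i p.2 → ∃ h : i ≤ k, f i k h p.1 = f i k h p.2 :=
    (eventually_ge_atTop i).and <| (eventually_all_finset _).2 fun _ _ =>
      eventually_imp_distrib_left.2 (hg.eventually_map_eq hf)
  obtain ⟨k, hik, hk⟩ := hev.exists
  refine ⟨k, hik, FreeGroup.map_eq_one_of_factorsThrough ?_ hS hz⟩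
  rintro ⟨a, ha⟩ ⟨b, hb⟩ hab
  exact (hk (a, b) (Finset.mem_product.2 ⟨ha, hb⟩) hab).2

theorem freeGroupMap [Nonempty J] [IsDirectedOrder J]
    (hf : ∀ i j k (hij : i ≤ j) (hjk : j ≤ k) x, f j k hjk (f i j hij x) = f i k (hij.trans hjk) x)
    (hg : IsDirectLimit f g) :
    IsDirectLimit (fun i j h => ⇑(FreeGroup.map (f i j h))) (fun i => ⇑(FreeGroup.map (g i))) where
  map_compat i j h := FreeGroup.map_map_eq (hg.map_compat i j h)
  exists_eq w := by
    induction w using FreeGroup.induction_on with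
    | C1 => exact ⟨Classical.arbitrary J, 1, map_one _⟩
    | of a =>
      obtain ⟨i, x, rfl⟩ := hg.exists_eq a
      exact ⟨i, FreeGroup.of x, rfl⟩
    | inv_of a ih =>
      obtain ⟨i, x, hx⟩ := ih
      exact ⟨i, x⁻¹, by rw [map_inv, hx]⟩
    | mul x y ihx ihy =>
      obtain ⟨i, u, rfl⟩ := ihx
      obtain ⟨j, v, rfl⟩ := ihy
      obtain ⟨k, hik, hjk⟩ := directed_of (· ≤ ·) i j
      refine ⟨k, FreeGroup.map (f i k hik) u * FreeGroup.map (f j k hjk) v, ?_⟩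
      rw [map_mul, FreeGroup.map_map_eq (hg.map_compat i k hik),
        FreeGroup.map_map_eq (hg.map_compat j k hjk)]
  exists_map_eq i x x' h := by
    obtain ⟨j, hij, hj⟩ := hg.exists_freeGroupMap_eq_one hf (z := x⁻¹ * x')
      (by rw [map_mul, map_inv, h, inv_mul_cancel])
    refine ⟨j, hij, ?_⟩
    rwa [map_mul, map_inv, inv_mul_eq_one] at hj

end Types

end IsDirectLimit

theorem Subgroup.map_top_lowerCentralSeries_le {G H : Type*} [Group G] [Group H] (θ : G →* H)
    (n : ℕ) :
    ((⊤ : Subgroup G).lowerCentralSeries n).map θ ≤ (⊤ : Subgroup H).lowerCentralSeries n :=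
  (Subgroup.map_lowerCentralSeries _ θ n).trans_le (Subgroup.lowerCentralSeries_mono n le_top)

theorem map_iterCommWith_le {F F' : Type*} [Group F] [Group F'] (θ : F →* F') {R : Subgroup F}
    {R' : Subgroup F'} (h : R.map θ ≤ R') : ∀ n, (iterCommWith R n).map θ ≤ iterCommWith R' n
  | 0 => h
  | n + 1 => by
    change (⁅iterCommWith R n, ⊤⁆ : Subgroup F).map θ ≤ ⁅iterCommWith R' n, ⊤⁆
    rw [Subgroup.map_commutator]
    exact Subgroup.commutator_mono (map_iterCommWith_le θ h n) le_top

section Groups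

variable {J : Type*} [Preorder J] {A : J → Type*} [∀ i, Group (A i)] {B : Type*} [Group B]
  {φ : ∀ i j, i ≤ j → A i →* A j} {ψ : ∀ i, A i →* B}

theorem monotone_map_of_map_le (hψ : ∀ i j (h : i ≤ j) x, ψ j (φ i j h x) = ψ i x)
    {S : ∀ i, Subgroup (A i)} (hS : ∀ i j h, (S i).map (φ i j h) ≤ S j) :
    Monotone fun i => (S i).map (ψ i) := by
  intro i j h
  calc (S i).map (ψ i) = ((S i).map (φ i j h)).map (ψ j) := by
        rw [Subgroup.map_map, MonoidHom.ext (f := (ψ j).comp (φ i j h)) (hψ i j h)]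
    _ ≤ (S j).map (ψ j) := Subgroup.map_mono (hS i j h)

theorem mem_iSup_map_iff [Nonempty J] [IsDirectedOrder J]
    (hψ : ∀ i j (h : i ≤ j) x, ψ j (φ i j h x) = ψ i x)
    {S : ∀ i, Subgroup (A i)} (hS : ∀ i j h, (S i).map (φ i j h) ≤ S j) {y : B} :
    y ∈ ⨆ i, (S i).map (ψ i) ↔ ∃ i, ∃ x ∈ S i, ψ i x = y := by
  rw [Subgroup.mem_iSup_of_directed (monotone_map_of_map_le hψ hS).directed_le]
  simp only [Subgroup.mem_map]

theorem commutator_iSup_map_le [Nonempty J] [IsDirectedOrder J]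
    (hψ : ∀ i j (h : i ≤ j) x, ψ j (φ i j h x) = ψ i x)
    {S T : ∀ i, Subgroup (A i)} (hS : ∀ i j h, (S i).map (φ i j h) ≤ S j)
    (hT : ∀ i j h, (T i).map (φ i j h) ≤ T j) :
    ⁅⨆ i, (S i).map (ψ i), ⨆ i, (T i).map (ψ i)⁆ ≤ ⨆ i, ⁅S i, T i⁆.map (ψ i) := by
  rw [Subgroup.commutator_le]
  intro _ hx _ hy
  obtain ⟨i, a, ha, rfl⟩ := (mem_iSup_map_iff hψ hS).1 hx
  obtain ⟨j, b, hb, rfl⟩ := (mem_iSup_map_iff hψ hT).1 hy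
  obtain ⟨k, hik, hjk⟩ := directed_of (· ≤ ·) i j
  refine Subgroup.mem_iSup_of_mem k ⟨⁅φ i k hik a, φ j k hjk b⁆,
    Subgroup.commutator_mem_commutator (hS i k hik ⟨a, ha, rfl⟩) (hT j k hjk ⟨b, hb, rfl⟩), ?_⟩
  rw [map_commutatorElement, hψ, hψ]

theorem inf_iSup_map_le [Nonempty J] [IsDirectedOrder J]
    (hψ : ∀ i j (h : i ≤ j) x, ψ j (φ i j h x) = ψ i x)
    {S R : ∀ i, Subgroup (A i)} {R' : Subgroup B} (hS : ∀ i j h, (S i).map (φ i j h) ≤ S j)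
    (hR : ∀ i x, ψ i x ∈ R' → ∃ j h, φ i j h x ∈ R j) :
    R' ⊓ ⨆ i, (S i).map (ψ i) ≤ ⨆ i, (R i ⊓ S i).map (ψ i) := by
  rintro _ ⟨hy, hyS⟩
  obtain ⟨i, x, hx, rfl⟩ := (mem_iSup_map_iff hψ hS).1 hyS
  obtain ⟨j, hij, hxR⟩ := hR i x hy
  exact Subgroup.mem_iSup_of_mem j ⟨φ i j hij x, ⟨hxR, hS i j hij ⟨x, hx, rfl⟩⟩, hψ i j hij x⟩

theorem IsDirectLimit.top_le_iSup_map
    (hG : IsDirectLimit (fun i j h => ⇑(φ i j h)) (fun i => ⇑(ψ i))) :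
    (⊤ : Subgroup B) ≤ ⨆ i, (⊤ : Subgroup (A i)).map (ψ i) := by
  intro y _
  obtain ⟨i, x, rfl⟩ := hG.exists_eq y
  exact Subgroup.mem_iSup_of_mem i ⟨x, trivial, rfl⟩

theorem IsDirectLimit.lowerCentralSeries_le_iSup_map [Nonempty J] [IsDirectedOrder J]
    (hG : IsDirectLimit (fun i j h => ⇑(φ i j h)) (fun i => ⇑(ψ i))) (n : ℕ) :
    (⊤ : Subgroup B).lowerCentralSeries n ≤
      ⨆ i, ((⊤ : Subgroup (A i)).lowerCentralSeries n).map (ψ i) := by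
  induction n with
  | zero => exact hG.top_le_iSup_map
  | succ n ih =>
    exact (Subgroup.commutator_mono ih hG.top_le_iSup_map).trans
      (commutator_iSup_map_le hG.map_compat
        (fun _ _ _ => Subgroup.map_top_lowerCentralSeries_le _ n) fun _ _ _ => le_top)

theorem IsDirectLimit.iterCommWith_le_iSup_map [Nonempty J] [IsDirectedOrder J]
    (hG : IsDirectLimit (fun i j h => ⇑(φ i j h)) (fun i => ⇑(ψ i)))
    {R : ∀ i, Subgroup (A i)} {R' : Subgroup B} (hR : ∀ i j h, (R i).map (φ i j h) ≤ R j)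
    (hR' : R' ≤ ⨆ i, (R i).map (ψ i)) (n : ℕ) :
    iterCommWith R' n ≤ ⨆ i, (iterCommWith (R i) n).map (ψ i) := by
  induction n with
  | zero => exact hR'
  | succ n ih =>
    exact (Subgroup.commutator_mono ih hG.top_le_iSup_map).trans
      (commutator_iSup_map_le hG.map_compat (fun i j h => map_iterCommWith_le _ (hR i j h) n)
        fun _ _ _ => le_top)

theorem IsDirectLimit.quotient [Nonempty J] [IsDirectedOrder J]
    (hφ : ∀ i j k (hij : i ≤ j) (hjk : j ≤ k) x, φ j k hjk (φ i j hij x) = φ i k (hij.trans hjk) x)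
    (hG : IsDirectLimit (fun i j h => ⇑(φ i j h)) (fun i => ⇑(ψ i)))
    {K N : ∀ i, Subgroup (A i)} {K' N' : Subgroup B} [∀ i, (N i).Normal] [N'.Normal]
    (hK : ∀ i j h, (K i).map (φ i j h) ≤ K j) (hN : ∀ i j h, (N i).map (φ i j h) ≤ N j)
    (hK' : K' = ⨆ i, (K i).map (ψ i)) (hN' : N' ≤ ⨆ i, (N i).map (ψ i))
    {m : ∀ i j, i ≤ j → K i ⧸ (N i).subgroupOf (K i) →* K j ⧸ (N j).subgroupOf (K j)}
    (hm : ∀ i j h x (hx : x ∈ K i) (hx' : φ i j h x ∈ K j),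
      m i j h (QuotientGroup.mk ⟨x, hx⟩) = QuotientGroup.mk ⟨φ i j h x, hx'⟩)
    {mg : ∀ i, K i ⧸ (N i).subgroupOf (K i) →* K' ⧸ N'.subgroupOf K'}
    (hmg : ∀ i x (hx : x ∈ K i) (hx' : ψ i x ∈ K'),
      mg i (QuotientGroup.mk ⟨x, hx⟩) = QuotientGroup.mk ⟨ψ i x, hx'⟩) :
    IsDirectLimit (fun i j h => ⇑(m i j h)) (fun i => ⇑(mg i)) := by
  have hψ : ∀ i j (h : i ≤ j) x, ψ j (φ i j h x) = ψ i x := hG.map_compat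
  have hψK : ∀ i, ∀ x ∈ K i, ψ i x ∈ K' := fun i x hx =>
    hK' ▸ Subgroup.mem_iSup_of_mem i ⟨x, hx, rfl⟩
  refine ⟨?_, ?_, ?_⟩
  · intro i j h x
    obtain ⟨⟨w, hw⟩, rfl⟩ := QuotientGroup.mk_surjective x
    have hw' := hK i j h ⟨w, hw, rfl⟩
    rw [hm i j h w hw hw', hmg j _ hw' (hψK j _ hw'), hmg i w hw (hψK i w hw)]
    simp only [hψ]
  · intro y
    obtain ⟨⟨w, hw⟩, rfl⟩ := QuotientGroup.mk_surjective y
    obtain ⟨i, x, hx, rfl⟩ := (mem_iSup_map_iff hψ hK).1 (hK' ▸ hw)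
    exact ⟨i, QuotientGroup.mk ⟨x, hx⟩, hmg i x hx hw⟩
  · intro i x x' hxx
    obtain ⟨⟨w, hw⟩, rfl⟩ := QuotientGroup.mk_surjective x
    obtain ⟨⟨w', hw'⟩, rfl⟩ := QuotientGroup.mk_surjective x'
    rw [hmg i w hw (hψK i w hw), hmg i w' hw' (hψK i w' hw')] at hxx
    have hmemN : ψ i (w⁻¹ * w') ∈ N' := by
      simpa [Subgroup.mem_subgroupOf] using QuotientGroup.eq.1 hxx
    obtain ⟨j, v, hv, hve⟩ := (mem_iSup_map_iff hψ hN).1 (hN' hmemN)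
    obtain ⟨k, hik, hjk⟩ := directed_of (· ≤ ·) i j
    obtain ⟨l, hkl, hl⟩ := hG.exists_map_eq k (φ i k hik (w⁻¹ * w')) (φ j k hjk v)
      (by simp only [hψ, hve])
    refine ⟨l, hik.trans hkl, ?_⟩
    rw [hm i l _ w hw (hK i l _ ⟨w, hw, rfl⟩), hm i l _ w' hw' (hK i l _ ⟨w', hw', rfl⟩),
      QuotientGroup.eq, Subgroup.mem_subgroupOf]
    change (φ i l _ w)⁻¹ * φ i l _ w' ∈ N l
    rw [← map_inv, ← map_mul, ← hφ i k l hik hkl, hl, hφ]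
    exact hN j l _ ⟨v, hv, rfl⟩

end Groups

section Presentation

variable {G H : Type*} [Group G] [Group H]

theorem lift_id_map (φ : G →* H) (x : FreeGroup G) :
    FreeGroup.lift id (FreeGroup.map φ x) = φ (FreeGroup.lift id x) :=
  DFunLike.congr_fun (FreeGroup.ext_hom ((FreeGroup.lift id).comp (FreeGroup.map φ))
    (φ.comp (FreeGroup.lift id)) fun _ => by simp) x

theorem map_presKer_le (φ : G →* H) : (presKer G).map (FreeGroup.map φ) ≤ presKer H := by
  rintro _ ⟨x, hx, rfl⟩
  change FreeGroup.lift id (FreeGroup.map φ x) = 1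
  rw [lift_id_map, MonoidHom.mem_ker.1 hx, map_one]

theorem map_presKer_inf_lowerCentralSeries_le (φ : G →* H) (c : ℕ) :
    (presKer G ⊓ (⊤ : Subgroup (FreeGroup G)).lowerCentralSeries c).map (FreeGroup.map φ) ≤
      presKer H ⊓ (⊤ : Subgroup (FreeGroup H)).lowerCentralSeries c :=
  (Subgroup.map_inf_le _ _ _).trans
    (inf_le_inf (map_presKer_le φ) (Subgroup.map_top_lowerCentralSeries_le _ c))

end Presentation

theorem IsDirectLimit.exists_freeGroupMap_mem_presKer {J : Type*} [Preorder J] {G : J → Type*}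
    [∀ i, Group (G i)] {Gc : Type*} [Group Gc] {f : ∀ i j, i ≤ j → G i →* G j} {g : ∀ i, G i →* Gc}
    (hG : IsDirectLimit (fun i j h => ⇑(f i j h)) (fun i => ⇑(g i))) {i : J} {x : FreeGroup (G i)}
    (hx : FreeGroup.map (g i) x ∈ presKer Gc) :
    ∃ j h, FreeGroup.map (f i j h) x ∈ presKer (G j) := by
  obtain ⟨j, h, hj⟩ := hG.exists_map_eq i (FreeGroup.lift id x) 1
    (by rw [map_one, ← lift_id_map]; exact hx)
  refine ⟨j, h, ?_⟩
  change FreeGroup.lift id (FreeGroup.map (f i j h) x) = 1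
  rw [lift_id_map, hj, map_one]

section Limit

variable {J : Type*} [Preorder J] [IsDirectedOrder J] [Nonempty J] {G : J → Type*}
  [∀ i, Group (G i)] {Gc : Type*} [Group Gc] {f : ∀ i j, i ≤ j → G i →* G j} {g : ∀ i, G i →* Gc}

theorem IsDirectLimit.presKer_le_iSup_map
    (hf : ∀ i j k (hij : i ≤ j) (hjk : j ≤ k) x, f j k hjk (f i j hij x) = f i k (hij.trans hjk) x)
    (hG : IsDirectLimit (fun i j h => ⇑(f i j h)) (fun i => ⇑(g i))) :
    presKer Gc ≤ ⨆ i, (presKer (G i)).map (FreeGroup.map (g i)) := by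
  have hF := hG.freeGroupMap hf
  calc presKer Gc ≤ presKer Gc ⊓ ⨆ i, (⊤ : Subgroup (FreeGroup (G i))).map (FreeGroup.map (g i)) :=
        le_inf le_rfl (le_top.trans hF.top_le_iSup_map)
    _ ≤ ⨆ i, (presKer (G i) ⊓ ⊤).map (FreeGroup.map (g i)) :=
        inf_iSup_map_le hF.map_compat (fun _ _ _ => le_top)
          fun _ _ => hG.exists_freeGroupMap_mem_presKer
    _ = ⨆ i, (presKer (G i)).map (FreeGroup.map (g i)) := by simp only [inf_top_eq]

theorem IsDirectLimit.presKer_inf_lowerCentralSeries_eq_iSup_map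
    (hf : ∀ i j k (hij : i ≤ j) (hjk : j ≤ k) x, f j k hjk (f i j hij x) = f i k (hij.trans hjk) x)
    (hG : IsDirectLimit (fun i j h => ⇑(f i j h)) (fun i => ⇑(g i))) (c : ℕ) :
    presKer Gc ⊓ (⊤ : Subgroup (FreeGroup Gc)).lowerCentralSeries c =
      ⨆ i, (presKer (G i) ⊓ (⊤ : Subgroup (FreeGroup (G i))).lowerCentralSeries c).map
        (FreeGroup.map (g i)) := by
  have hF := hG.freeGroupMap hf
  refine le_antisymm ?_ (iSup_le fun _ => map_presKer_inf_lowerCentralSeries_le _ c)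
  exact (inf_le_inf_left _ (hF.lowerCentralSeries_le_iSup_map c)).trans <|
    inf_iSup_map_le hF.map_compat (fun _ _ _ => Subgroup.map_top_lowerCentralSeries_le _ c)
      fun _ _ => hG.exists_freeGroupMap_mem_presKer

end Limit

theorem nilMult_commutes_with_directLimit_general
    (J : Type*) [Preorder J] [IsDirected J (· ≤ ·)] [Nonempty J]
    (G : J → Type*) [∀ i, Group (G i)]
    (f : ∀ i j : J, i ≤ j → (G i →* G j))
    (hf_comp : ∀ i j k (hij : i ≤ j) (hjk : j ≤ k) (x : G i),
      f j k hjk (f i j hij x) = f i k (le_trans hij hjk) x)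
    (Gc : Type*) [Group Gc] (g : ∀ i, G i →* Gc)
    (hg_compat : ∀ i j (h : i ≤ j) (x : G i), g j (f i j h x) = g i x)
    (hg_surj : ∀ y : Gc, ∃ (i : J) (x : G i), g i x = y)
    (hg_eq : ∀ i (x x' : G i), g i x = g i x' → ∃ (j : J) (h : i ≤ j), f i j h x = f i j h x')
    (c : ℕ)
    (m : ∀ i j : J, i ≤ j → (nilMult c (G i) →* nilMult c (G j)))
    (hm : ∀ i j (h : i ≤ j), IsInducedMap c (f i j h) (m i j h))
    (mg : ∀ i, nilMult c (G i) →* nilMult c Gc)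
    (hmg : ∀ i, IsInducedMap c (g i) (mg i)) :
    (∀ i j (h : i ≤ j) (x : nilMult c (G i)), mg j (m i j h x) = mg i x) ∧
    (∀ y : nilMult c Gc, ∃ (i : J) (x : nilMult c (G i)), mg i x = y) ∧
    (∀ i (x x' : nilMult c (G i)), mg i x = mg i x' →
      ∃ (j : J) (h : i ≤ j), m i j h x = m i j h x') := by
  have hG : IsDirectLimit (fun i j h => ⇑(f i j h)) (fun i => ⇑(g i)) :=
    ⟨hg_compat, hg_surj, hg_eq⟩
  have hF := hG.freeGroupMap hf_comp
  have h := hF.quotient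
    (φ := fun i j h => FreeGroup.map (f i j h)) (ψ := fun i => FreeGroup.map (g i))
    (K := fun i => presKer (G i) ⊓ (⊤ : Subgroup (FreeGroup (G i))).lowerCentralSeries c)
    (N := fun i => iterCommWith (presKer (G i)) c)
    (fun i j k hij hjk => FreeGroup.map_map_eq (hf_comp i j k hij hjk))
    (fun _ _ _ => map_presKer_inf_lowerCentralSeries_le _ c)
    (fun _ _ _ => map_iterCommWith_le _ (map_presKer_le _) c)
    (hG.presKer_inf_lowerCentralSeries_eq_iSup_map hf_comp c)
    (hF.iterCommWith_le_iSup_map (fun _ _ _ => map_presKer_le _) (hG.presKer_le_iSup_map hf_comp) c)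
    hm hmg
  exact ⟨h.map_compat, h.exists_eq, h.exists_map_eq⟩

/-- The `c`-nilpotent multiplier commutes with direct limits: if `Gc` is the direct limit of a
directed system `{G i}` (expressed by the standard filtered-colimit properties), then
`M^{(c)}(Gc)`, with the induced maps, is the direct limit of the system `{M^{(c)}(G i)}`. -/
theorem nilMult_commutes_with_directLimit
    (J : Type*) [Preorder J] [IsDirected J (· ≤ ·)] [Nonempty J]
    (G : J → Type*) [∀ i, Group (G i)]
    (f : ∀ i j : J, i ≤ j → (G i →* G j))
    (hf_id : ∀ i (h : i ≤ i), f i i h = MonoidHom.id (G i))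
    (hf_comp : ∀ i j k (hij : i ≤ j) (hjk : j ≤ k) (x : G i),
      f j k hjk (f i j hij x) = f i k (le_trans hij hjk) x)
    (Gc : Type*) [Group Gc] (g : ∀ i, G i →* Gc)
    (hg_compat : ∀ i j (h : i ≤ j) (x : G i), g j (f i j h x) = g i x)
    (hg_surj : ∀ y : Gc, ∃ (i : J) (x : G i), g i x = y)
    (hg_eq : ∀ i (x x' : G i), g i x = g i x' → ∃ (j : J) (h : i ≤ j), f i j h x = f i j h x')
    (c : ℕ) (hc : 1 ≤ c)
    (m : ∀ i j : J, i ≤ j → (nilMult c (G i) →* nilMult c (G j)))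
    (hm : ∀ i j (h : i ≤ j), IsInducedMap c (f i j h) (m i j h))
    (mg : ∀ i, nilMult c (G i) →* nilMult c Gc)
    (hmg : ∀ i, IsInducedMap c (g i) (mg i)) :
    (∀ i j (h : i ≤ j) (x : nilMult c (G i)), mg j (m i j h x) = mg i x) ∧
    (∀ y : nilMult c Gc, ∃ (i : J) (x : nilMult c (G i)), mg i x = y) ∧
    (∀ i (x x' : nilMult c (G i)), mg i x = mg i x' →
      ∃ (j : J) (h : i ≤ j), m i j h x = m i j h x') :=
  nilMult_commutes_with_directLimit_general J G f hf_comp Gc g hg_compat hg_surj hg_eq c m hm mg hmg
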